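/- If u = a·v + e pointwise with a > 0, and v has nonzero centered norm, then corr(u, v) ≥ 1 − ||ē||/(a·||v̄||) · 2, i.e., the Pearson correlation of u and v is at least 1 − 2||ē||/(a||v̄||). -/

import Mathlib

noncomputable def center {n : ℕ} (v : Fin n → ℝ) : Fin n → ℝ :=
  fun i => v i - (∑ j, v j) / n

noncomputable def vnorm {n : ℕ} (v : Fin n → ℝ) : ℝ :=
  Real.sqrt (∑ i, (v i) ^ 2)

noncomputable def pcorr {n : ℕ} (x y : Fin n → ℝ) : ℝ :=
  (∑ i, center x i * center y i) / (vnorm (center x) * vnorm (center y))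

/-!
After centering, `pcorr u v` is the cosine of the angle between `x = a • v̄ + ē` and `y = a • v̄`
(scaling `v̄` by `a > 0` does not change the angle), and `‖x - y‖ / ‖y‖ = ‖ē‖ / (a ‖v̄‖)`.
For any `x` within distance `d < ‖y‖` of `y ≠ 0`, Cauchy–Schwarz and the triangle inequality give
`⟪x, y⟫ ≥ ‖y‖ (‖y‖ - d)` and `‖x‖ ≤ ‖y‖ + d`, so the cosine is at least
`(‖y‖ - d) / (‖y‖ + d) ≥ 1 - 2 d / ‖y‖`; for `d ≥ ‖y‖` the bound is below `-1`.
-/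

open InnerProductGeometry
open scoped RealInnerProductSpace

theorem InnerProductGeometry.one_sub_two_mul_norm_sub_div_le_cos_angle {F : Type*}
    [NormedAddCommGroup F] [InnerProductSpace ℝ F] {x y : F} (hy : y ≠ 0) :
    1 - 2 * ‖x - y‖ / ‖y‖ ≤ Real.cos (angle x y) := by
  have hr : 0 < ‖y‖ := norm_pos_iff.mpr hy
  rcases le_or_gt ‖y‖ ‖x - y‖ with hfar | hnear
  · calc 1 - 2 * ‖x - y‖ / ‖y‖ ≤ -1 := by
          rw [sub_le_iff_le_add, ← sub_le_iff_le_add', le_div_iff₀ hr]; linarith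
      _ ≤ Real.cos (angle x y) := Real.neg_one_le_cos _
  have hinner : ‖y‖ * (‖y‖ - ‖x - y‖) ≤ ⟪x, y⟫ := by
    have hsplit : ⟪x, y⟫ = ⟪x - y, y⟫ + ‖y‖ ^ 2 := by
      rw [inner_sub_left, real_inner_self_eq_norm_sq]; ring
    have := neg_le_of_abs_le (abs_real_inner_le_norm (x - y) y)
    linarith
  have hinner_pos : 0 < ⟪x, y⟫ := (mul_pos hr (sub_pos.mpr hnear)).trans_le hinner
  have hx_pos : 0 < ‖x‖ := by
    have := real_inner_le_norm x y
    nlinarith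
  rw [cos_angle, le_div_iff₀ (by positivity),
    show (1 - 2 * ‖x - y‖ / ‖y‖) * (‖x‖ * ‖y‖) = (‖y‖ - 2 * ‖x - y‖) * ‖x‖ by field_simp]
  rcases le_or_gt ‖y‖ (2 * ‖x - y‖) with hle | hlt
  · exact (mul_nonpos_of_nonpos_of_nonneg (by linarith) hx_pos.le).trans hinner_pos.le
  · calc (‖y‖ - 2 * ‖x - y‖) * ‖x‖ ≤ (‖y‖ - 2 * ‖x - y‖) * (‖y‖ + ‖x - y‖) :=
          mul_le_mul_of_nonneg_left (norm_le_norm_add_norm_sub' x y) (by linarith)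
      _ ≤ ‖y‖ * (‖y‖ - ‖x - y‖) := by nlinarith [sq_nonneg ‖x - y‖]
      _ ≤ ⟪x, y⟫ := hinner

theorem center_add {n : ℕ} (v w : Fin n → ℝ) : center (v + w) = center v + center w := by
  funext i
  simp only [center, Pi.add_apply, Finset.sum_add_distrib]
  ring

theorem center_smul {n : ℕ} (a : ℝ) (v : Fin n → ℝ) : center (a • v) = a • center v := by
  funext i
  simp only [center, Pi.smul_apply, smul_eq_mul, ← Finset.mul_sum]
  ring

theorem vnorm_eq_norm_toLp {n : ℕ} (v : Fin n → ℝ) :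
    vnorm v = ‖(WithLp.toLp 2 v : EuclideanSpace ℝ (Fin n))‖ := by
  simp [vnorm, EuclideanSpace.norm_eq]

theorem pcorr_eq_cos_angle {n : ℕ} (x y : Fin n → ℝ) :
    pcorr x y = Real.cos (angle (WithLp.toLp 2 (center x) : EuclideanSpace ℝ (Fin n))
      (WithLp.toLp 2 (center y))) := by
  rw [cos_angle, pcorr, vnorm_eq_norm_toLp, vnorm_eq_norm_toLp, PiLp.inner_apply]
  simp [mul_comm]

theorem corr_lower_bound_of_linear_plus_error {N : ℕ}
    (u v e : Fin N → ℝ) (a : ℝ) (ha : 0 < a)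
    (hu : u = fun i => a * v i + e i)
    (hv : vnorm (center v) ≠ 0) :
    1 - 2 * vnorm (center e) / (a * vnorm (center v)) ≤ pcorr u v := by
  set V : EuclideanSpace ℝ (Fin N) := WithLp.toLp 2 (center v)
  set E : EuclideanSpace ℝ (Fin N) := WithLp.toLp 2 (center e)
  have hV : V ≠ 0 := by rwa [vnorm_eq_norm_toLp, norm_ne_zero_iff] at hv
  have hU : (WithLp.toLp 2 (center u) : EuclideanSpace ℝ (Fin N)) = a • V + E := by
    rw [show u = a • v + e from hu, center_add, center_smul]; rfl
  calc 1 - 2 * vnorm (center e) / (a * vnorm (center v))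
      = 1 - 2 * ‖(a • V + E) - a • V‖ / ‖a • V‖ := by
        rw [add_sub_cancel_left, norm_smul, Real.norm_of_nonneg ha.le,
          vnorm_eq_norm_toLp, vnorm_eq_norm_toLp]
    _ ≤ Real.cos (angle (a • V + E) (a • V)) :=
        one_sub_two_mul_norm_sub_div_le_cos_angle (smul_ne_zero ha.ne' hV)
    _ = pcorr u v := by rw [angle_smul_right_of_pos _ _ ha, pcorr_eq_cos_angle, hU]
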